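/- Let (X, ↪, P) be a primal-proximity space and A, B, H ⊆ X with A ⊆ B. If A ↪ B and {b} ↪ H for every b ∈ B, then A ↪ H. -/

import Mathlib

open Set

/-- A collection `P` of subsets of `X` is a *primal* on `X`. -/
def IsPrimalOn {X : Type*} (P : Set (Set X)) : Prop :=
  (Set.univ : Set X) ∉ P ∧
  (∀ A B : Set X, A ∈ P → B ⊆ A → B ∈ P) ∧
  (∀ A B : Set X, A ∩ B ∈ P → A ∈ P ∨ B ∈ P)

/-- A binary relation `r` on the power set of `X` is a *primal-proximity* with
respect to a primal `P` on `X`. -/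
def IsPrimalProximity {X : Type*} (P : Set (Set X)) (r : Set X → Set X → Prop) : Prop :=
  (∀ A B : Set X, r A B → r B A) ∧
  (∀ A B C : Set X, r A (B ∪ C) ↔ (r A B ∨ r A C)) ∧
  (∀ A : Set X, Aᶜ ∉ P → ∀ B : Set X, ¬ r A B) ∧
  (∀ A B : Set X, (A ∩ B)ᶜ ∈ P → r A B) ∧
  (∀ A B : Set X, ¬ r A B →
    ∃ C D : Set X, ¬ r A Cᶜ ∧ ¬ r Dᶜ B ∧ (C ∩ D)ᶜ ∉ P)

/-- The point-primal proximity of `A`: `A^↪ = {x | {x} ↪ A}`. -/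
def ppp {X : Type*} (r : Set X → Set X → Prop) (A : Set X) : Set X :=
  {x : X | r {x} A}

/-! If `A` were far from `H`, axiom (5) would separate them by some `C`, `D`. Every point of `B`
is near `H`, so `B ⊆ D` and `A` is near `D ⊆ (C ∩ D) ∪ Cᶜ`, yet `A` is far from both pieces. -/

namespace IsPrimalProximity

variable {X : Type*} {P : Set (Set X)} {r : Set X → Set X → Prop} {A B C D H : Set X}

theorem symm (hr : IsPrimalProximity P r) (h : r A B) : r B A :=
  hr.1 A B h

theorem rel_union_right_iff (hr : IsPrimalProximity P r) : r A (B ∪ C) ↔ r A B ∨ r A C :=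
  hr.2.1 A B C

theorem mono_right (hr : IsPrimalProximity P r) (h : r A B) (hBC : B ⊆ C) : r A C := by
  simpa only [union_eq_self_of_subset_left hBC] using
    (hr.rel_union_right_iff (C := C)).2 (Or.inl h)

theorem mono_left (hr : IsPrimalProximity P r) (h : r A B) (hAC : A ⊆ C) : r C B :=
  hr.symm (hr.mono_right (hr.symm h) hAC)

theorem not_rel_of_compl_notMem_right (hr : IsPrimalProximity P r) (hB : Bᶜ ∉ P) : ¬ r A B :=
  fun h => hr.2.2.1 B hB A (hr.symm h)

theorem ppp_subset_of_not_rel_compl (hr : IsPrimalProximity P r) (hD : ¬ r Dᶜ H) :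
    ppp r H ⊆ D := by
  intro x hx
  by_contra hxD
  exact hD (hr.mono_left hx (singleton_subset_iff.2 hxD))

theorem not_rel_of_not_rel_compl (hr : IsPrimalProximity P r) (hC : ¬ r A Cᶜ)
    (hCD : (C ∩ D)ᶜ ∉ P) : ¬ r A D := by
  intro hAD
  have hD : D ⊆ (C ∩ D) ∪ Cᶜ := fun x hx => (em (x ∈ C)).imp (fun hxC => ⟨hxC, hx⟩) id
  rcases hr.rel_union_right_iff.1 (hr.mono_right hAD hD) with hAC | hAC
  · exact hr.not_rel_of_compl_notMem_right hCD hAC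
  · exact hC hAC

end IsPrimalProximity

theorem stmt_19_general {X : Type*} (P : Set (Set X)) (r : Set X → Set X → Prop)
    (hr : IsPrimalProximity P r)
    (A B H : Set X) (h1 : r A B) (h2 : ∀ b ∈ B, r {b} H) :
    r A H := by
  by_contra hAH
  obtain ⟨C, D, hAC, hDH, hCD⟩ := hr.2.2.2.2 A H hAH
  have hBD : B ⊆ D := fun b hb => hr.ppp_subset_of_not_rel_compl hDH (h2 b hb)
  exact hr.not_rel_of_not_rel_compl hAC hCD (hr.mono_right h1 hBD)

theorem stmt_19 {X : Type*} [Nonempty X] (P : Set (Set X)) (r : Set X → Set X → Prop)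
    (hP : IsPrimalOn P) (hr : IsPrimalProximity P r)
    (A B H : Set X) (hAB : A ⊆ B) (h1 : r A B) (h2 : ∀ b ∈ B, r {b} H) :
    r A H :=
  stmt_19_general P r hr A B H h1 h2
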